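/- For partitions λ and μ each with at most n parts, the product of Schur polynomials satisfies s_λ · s_μ = det(h_{λ_i + μ_{n+1-j} - i + j})_{i,j=1}^n, where h_k denotes the k-th complete homogeneous symmetric polynomial, with the conventions h_0 = 1 and h_k = 0 for k < 0. -/

import Mathlib

/-!
Write `a_α = det (x_k ^ α_i)` and `δ_i = n - 1 - i`. The geometric sequences `m ↦ x_k ^ m`
and, because `(∑ h_m t^m) · ∏ (1 - x_k t) = 1`, the shifted sequences `m ↦ h_{m + c}` with
`c ≥ 1 - n` all solve the linear recurrence with characteristic polynomial `∏ (t - x_k)`,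
and such a solution is determined by its first `n` terms. Inverting the Vandermonde matrix
`(x_k ^ δ_i)` therefore writes `a_δ · h_{m + c_j}` as a combination of the `x_k ^ m`,
whence `a_δ · det (h_{α_i + c_j}) = a_α · det (h_{δ_i + c_j})`.
For `α = λ + δ` and `c_j = j + 1 - n` the right-hand determinant is unitriangular, so
`a_δ s_λ = a_{λ+δ}`; for `c_j = μ_{n-1-j} + j + 1 - n` it is `s_μ`, so `a_δ` times the
determinant of the theorem is `a_{λ+δ} s_μ = a_δ s_λ s_μ`, and `a_δ ≠ 0` cancels.
-/

open MvPolynomial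

/-- Complete homogeneous symmetric polynomial in `n` variables, indexed by an
integer, with the convention `h_k = 0` for `k < 0` and `h_0 = 1`. -/
noncomputable def hInt (n : ℕ) (k : ℤ) : MvPolynomial (Fin n) ℤ :=
  if 0 ≤ k then hsymm (Fin n) ℤ k.toNat else 0

/-- The Schur polynomial of `α` in `n` variables, defined via the
Jacobi–Trudi determinant `s_α = det (h_{α_i - i + j})_{i,j}`. -/
noncomputable def schur (n : ℕ) (α : Fin n → ℕ) : MvPolynomial (Fin n) ℤ :=
  Matrix.det (Matrix.of fun i j : Fin n => hInt n ((α i : ℤ) - (i : ℕ) + (j : ℕ)))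

/-- A symmetric polynomial is Schur positive if it is a nonnegative integer
combination of Schur polynomials of partitions. -/
def SchurPositive (n : ℕ) (f : MvPolynomial (Fin n) ℤ) : Prop :=
  ∃ c : (Fin n → ℕ) →₀ ℕ, (∀ lam ∈ c.support, Antitone lam) ∧
    f = c.sum fun lam k => (k : ℤ) • schur n lam

open Finset Matrix
open scoped Polynomial

namespace Polynomial

variable {R ι : Type*} [CommRing R]

theorem reflect_prod_X_sub_C (s : Finset ι) (a : ι → R) :
    reflect #s (∏ i ∈ s, (X - C (a i))) = ∏ i ∈ s, (1 - C (a i) * X) := by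
  classical
  induction s using Finset.induction_on with
  | empty => simp
  | insert i s hi ih =>
    have hdeg : (∏ i ∈ s, (X - C (a i))).natDegree ≤ #s :=
      (natDegree_prod_le _ _).trans <|
        (sum_le_sum fun _ _ => natDegree_X_sub_C_le _).trans (by simp)
    rw [prod_insert hi, prod_insert hi, card_insert_of_notMem hi, add_comm,
      reflect_mul _ _ (natDegree_X_sub_C_le _) hdeg, ih]
    simp [reflect_sub, reflect_C]

theorem reflect_eq_sum_range {p : R[X]} {N : ℕ} (hp : p.natDegree ≤ N) :
    reflect N p = ∑ i ∈ range (N + 1), C (p.coeff i) * X ^ (N - i) := by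
  ext j
  simp only [coeff_reflect, finsetSum_coeff, coeff_C_mul_X_pow]
  rcases le_or_gt j N with hj | hj
  · rw [revAt_le hj, sum_eq_single_of_mem (N - j) (by simp)
      fun i hi _ => if_neg (by simp at hi; omega), if_pos (by omega)]
  · rw [revAt_eq_self_of_lt hj, coeff_eq_zero_of_natDegree_lt (hp.trans_lt hj)]
    exact (sum_eq_zero fun i _ => if_neg (by omega)).symm

end Polynomial

namespace LinearRecurrence

variable {S : Type*} [CommRing S]

def ofPoly (p : S[X]) : LinearRecurrence S := ⟨p.natDegree, fun i => -p.coeff i⟩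

theorem charPoly_ofPoly {p : S[X]} (hp : p.Monic) : (ofPoly p).charPoly = p := by
  change Polynomial.monomial p.natDegree 1 -
    ∑ i : Fin p.natDegree, Polynomial.monomial i (-p.coeff i) = p
  conv_rhs => rw [hp.as_sum]
  rw [← Fin.sum_univ_eq_sum_range (fun i => Polynomial.C (p.coeff i) * Polynomial.X ^ i)]
  simp [← Polynomial.C_mul_X_pow_eq_monomial, sub_eq_add_neg]

theorem isSolution_ofPoly_iff {p : S[X]} (hp : p.Monic) {u : ℕ → S} :
    (ofPoly p).IsSolution u ↔
      ∀ m, ∑ i ∈ range (p.natDegree + 1), p.coeff i * u (m + i) = 0 := by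
  refine forall_congr' fun m => ?_
  change u (m + p.natDegree) = ∑ i : Fin p.natDegree, -p.coeff i * u (m + i) ↔ _
  rw [sum_range_succ, hp.coeff_natDegree, one_mul,
    ← Fin.sum_univ_eq_sum_range (fun i => p.coeff i * u (m + i)), add_eq_zero_iff_eq_neg']
  simp

variable {n : ℕ} (x : Fin n → S)

noncomputable abbrev ofRoots : LinearRecurrence S :=
  ofPoly (∏ k, (Polynomial.X - Polynomial.C (x k)))

theorem order_ofRoots [Nontrivial S] : (ofRoots x).order = n := by
  simp [ofPoly]

theorem isSolution_ofRoots_pow (k : Fin n) : (ofRoots x).IsSolution (x k ^ ·) := by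
  rw [geom_sol_iff_root_charPoly,
    charPoly_ofPoly (Polynomial.monic_prod_of_monic _ _ fun _ _ => Polynomial.monic_X_sub_C _),
    Polynomial.IsRoot, Polynomial.eval_prod]
  exact prod_eq_zero (mem_univ k) (by simp)

theorem eq_of_isSolution_ofRoots [Nontrivial S] {u v : ℕ → S} (hu : (ofRoots x).IsSolution u)
    (hv : (ofRoots x).IsSolution v) (h : ∀ m < n, u m = v m) : u = v :=
  ((ofRoots x).eq_iff_eqOn_range_order u v hu hv).mpr
    fun m hm => h m (by simpa [order_ofRoots] using hm)

end LinearRecurrence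

section Alternant

variable {S : Type*} [CommRing S] {n : ℕ}

def alternant (x : Fin n → S) (α : Fin n → ℕ) : S := det (of fun i k => x k ^ α i)

theorem alternant_rev_ne_zero [IsDomain S] {x : Fin n → S} (hx : Function.Injective x) :
    alternant x (fun i => i.rev) ≠ 0 := by
  have hV : (of fun i k => x k ^ (i.rev : ℕ)) = (vandermonde x)ᵀ.submatrix Fin.revPerm id := by
    ext i k
    simp [vandermonde]
  rw [alternant, hV, det_permute, det_transpose]
  exact mul_ne_zero ((Equiv.Perm.sign _).isUnit.map (Int.castRingHom S)).ne_zero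
    (det_vandermonde_ne_zero_iff.mpr hx)

theorem sum_adjugate_mulVec_mul_pow [Nontrivial S] {x : Fin n → S} {u : ℕ → S}
    (hu : (LinearRecurrence.ofRoots x).IsSolution u) (m : ℕ) :
    ∑ k, (adjugate (of fun i k => x k ^ (i.rev : ℕ)) *ᵥ fun i => u i.rev) k * x k ^ m =
      alternant x (fun i => i.rev) * u m := by
  set V : Matrix (Fin n) (Fin n) S := of fun i k => x k ^ (i.rev : ℕ)
  set w := adjugate V *ᵥ fun i => u i.rev
  have hVw : V *ᵥ w = alternant x (fun i => i.rev) • fun i => u i.rev := by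
    rw [mulVec_mulVec, mul_adjugate, smul_mulVec, one_mulVec]
    rfl
  suffices (fun m => ∑ k, w k * x k ^ m) = fun m => alternant x (fun i => i.rev) * u m from
    congrFun this m
  refine LinearRecurrence.eq_of_isSolution_ofRoots x ?_ ?_ fun m hm => ?_
  · have hw : (fun m => ∑ k, w k * x k ^ m) = ∑ k, w k • (x k ^ ·) := by
      ext
      simp
    rw [hw, LinearRecurrence.is_sol_iff_mem_solSpace]
    exact Submodule.sum_mem _ fun k _ =>
      Submodule.smul_mem _ _ (LinearRecurrence.isSolution_ofRoots_pow x k)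
  · exact Submodule.smul_mem (LinearRecurrence.ofRoots x).solSpace _ hu
  · have hrow := congrFun hVw (Fin.rev ⟨m, hm⟩)
    simp only [V, mulVec, dotProduct, of_apply, Fin.rev_rev, Pi.smul_apply, smul_eq_mul] at hrow
    simpa [mul_comm] using hrow

theorem alternant_rev_mul_det [IsDomain S] {x : Fin n → S} (hx : Function.Injective x)
    {f : Fin n → ℕ → S} (hf : ∀ j, (LinearRecurrence.ofRoots x).IsSolution (f j))
    (α : Fin n → ℕ) :
    alternant x (fun i => i.rev) * det (of fun i j => f j (α i)) =
      alternant x α * det (of fun i j => f j i.rev) := by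
  rcases Nat.eq_zero_or_pos n with rfl | hn
  · simp [alternant]
  have hW : (of fun i k => x k ^ α i) * (adjugate (of fun i k => x k ^ (i.rev : ℕ)) *
      of fun i j => f j i.rev) = alternant x (fun i => i.rev) • of fun i j => f j (α i) := by
    ext i j
    rw [mul_apply, Matrix.smul_apply, of_apply, smul_eq_mul, ← sum_adjugate_mulVec_mul_pow (hf j)]
    exact sum_congr rfl fun k _ => mul_comm _ _
  have hdet := congrArg det hW
  rw [det_mul, det_smul, det_mul, det_adjugate, Fintype.card_fin, ← pow_sub_one_mul hn.ne']
    at hdet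
  refine mul_left_cancel₀ (pow_ne_zero (n - 1) (alternant_rev_ne_zero hx)) ?_
  unfold alternant at hdet ⊢
  linear_combination -hdet

end Alternant

namespace MvPolynomial

variable {σ R : Type*} [Fintype σ] [DecidableEq σ]

theorem hsymm_eq_sum_finsuppAntidiag [CommSemiring R] (d : ℕ) :
    hsymm σ R d = ∑ l ∈ univ.finsuppAntidiag d, ∏ i, X i ^ l i := by
  have card_toMultiset {l : σ →₀ ℕ} (hl : l ∈ univ.finsuppAntidiag d) :
      Multiset.card (Finsupp.toMultiset l) = d := by
    rw [Finsupp.card_toMultiset, Finsupp.sum_fintype _ _ fun _ => rfl]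
    exact (mem_finsuppAntidiag.mp hl).1
  refine sum_bij' (fun s _ => Multiset.toFinsupp (s : Multiset σ))
    (fun l hl => ⟨Finsupp.toMultiset l, card_toMultiset hl⟩)
    (fun s _ => ?_) (fun _ _ => mem_univ _) (fun s _ => Sym.coe_injective (by simp))
    (fun l _ => by simp) (fun s _ => ?_)
  · refine mem_finsuppAntidiag.mpr ⟨?_, subset_univ _⟩
    refine Eq.trans ?_ ((Multiset.sum_count_eq_card fun a _ => mem_univ a).trans s.2)
    exact sum_congr rfl fun a _ => Multiset.toFinsupp_apply _ a
  · simp only [Multiset.toFinsupp_apply]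
    rw [prod_multiset_map_count]
    exact prod_subset (subset_univ _) fun i _ hi => by
      rw [Multiset.count_eq_zero_of_notMem (by simpa using hi), pow_zero]

theorem prod_mk_pow_X_eq_mk_hsymm [CommSemiring R] :
    ∏ i : σ, PowerSeries.mk (fun m => (X i : MvPolynomial σ R) ^ m) =
      PowerSeries.mk (hsymm σ R) := by
  ext d
  rw [PowerSeries.coeff_prod, PowerSeries.coeff_mk, hsymm_eq_sum_finsuppAntidiag]
  simp

theorem mk_hsymm_mul_prod_one_sub_C_mul_X [CommRing R] :
    PowerSeries.mk (hsymm σ R) * ∏ i : σ, (1 - PowerSeries.C (X i) * PowerSeries.X) = 1 := by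
  rw [← prod_mk_pow_X_eq_mk_hsymm, ← prod_mul_distrib]
  refine prod_eq_one fun i _ => ?_
  simpa [PowerSeries.rescale_mk, PowerSeries.rescale_X] using
    congrArg (PowerSeries.rescale (X i)) (PowerSeries.mk_one_mul_one_sub_eq_one (MvPolynomial σ R))

end MvPolynomial

section JacobiTrudi

variable {n : ℕ}

theorem hInt_of_neg {k : ℤ} (hk : k < 0) : hInt n k = 0 := if_neg hk.not_ge

theorem hInt_natCast_sub_eq_coeff (K r : ℕ) :
    hInt n (K - r) =
      PowerSeries.coeff K (PowerSeries.X ^ r * PowerSeries.mk (hsymm (Fin n) ℤ)) := by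
  rw [PowerSeries.coeff_X_pow_mul', hInt]
  split_ifs with h₁ h₂ h₂
  · rw [PowerSeries.coeff_mk]
    congr
    omega
  · omega
  · omega
  · rfl

theorem isSolution_hInt (c : ℤ) (hc : 1 - n ≤ c) :
    (LinearRecurrence.ofRoots (X : Fin n → MvPolynomial (Fin n) ℤ)).IsSolution
      fun m => hInt n (m + c) := by
  set P := ∏ k : Fin n, (Polynomial.X - Polynomial.C (X k : MvPolynomial (Fin n) ℤ))
  have hP : P.Monic := Polynomial.monic_prod_of_monic _ _ fun _ _ => Polynomial.monic_X_sub_C _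
  have hdeg : P.natDegree = n := LinearRecurrence.order_ofRoots _
  have hreflect : (P.reflect n : PowerSeries (MvPolynomial (Fin n) ℤ)) =
      ∏ k : Fin n, (1 - PowerSeries.C (X k : MvPolynomial (Fin n) ℤ) * PowerSeries.X) := by
    have h := Polynomial.reflect_prod_X_sub_C univ (X : Fin n → MvPolynomial (Fin n) ℤ)
    rw [card_univ, Fintype.card_fin] at h
    rw [h, ← Polynomial.coeToPowerSeries.ringHom_apply, map_prod]
    simp
  rw [LinearRecurrence.isSolution_ofPoly_iff hP, hdeg]
  intro m
  obtain ⟨K, hK⟩ : ∃ K : ℕ, (K : ℤ) = m + c + n :=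
    ⟨(m + c + n).toNat, Int.toNat_of_nonneg (by omega)⟩
  calc ∑ i ∈ range (n + 1), P.coeff i * hInt n ((m + i : ℕ) + c)
      = ∑ i ∈ range (n + 1), PowerSeries.coeff K (PowerSeries.C (P.coeff i) *
          PowerSeries.X ^ (n - i) * PowerSeries.mk (hsymm (Fin n) ℤ)) := by
        refine sum_congr rfl fun i hi => ?_
        rw [mul_assoc, PowerSeries.coeff_C_mul, ← hInt_natCast_sub_eq_coeff]
        rw [mem_range] at hi
        congr 2
        omega
    _ = PowerSeries.coeff K
          ((P.reflect n : PowerSeries _) * PowerSeries.mk (hsymm (Fin n) ℤ)) := by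
        rw [Polynomial.reflect_eq_sum_range hdeg.le, ← Polynomial.coeToPowerSeries.ringHom_apply,
          map_sum, sum_mul, map_sum]
        simp
    _ = 0 := by
        rw [hreflect, mul_comm, mk_hsymm_mul_prod_one_sub_C_mul_X, PowerSeries.coeff_one,
          if_neg (by omega)]

theorem alternant_rev_mul_det_hInt (α : Fin n → ℕ) {c : Fin n → ℤ}
    (hc : ∀ j, 1 - (n : ℤ) ≤ c j) :
    alternant (X : Fin n → MvPolynomial (Fin n) ℤ) (fun i => i.rev) *
        det (of fun i j => hInt n (α i + c j)) =
      alternant X α * det (of fun i j : Fin n => hInt n ((i.rev : ℕ) + c j)) :=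
  alternant_rev_mul_det X_injective (fun j => isSolution_hInt (c j) (hc j)) α

theorem det_hInt_sub_eq_one : det (of fun i j : Fin n => hInt n ((j : ℕ) - (i : ℕ))) = 1 := by
  rw [det_of_isUpperTriangular fun i j (hij : j < i) =>
    by simpa using hInt_of_neg (by simpa using hij)]
  exact prod_eq_one fun i _ => by simp [hInt]

theorem alternant_rev_mul_schur (lam : Fin n → ℕ) :
    alternant (X : Fin n → MvPolynomial (Fin n) ℤ) (fun i => i.rev) * schur n lam =
      alternant X (fun i => lam i + i.rev) := by
  have key := alternant_rev_mul_det_hInt (fun i => lam i + i.rev) (c := fun j => j + 1 - n)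
    fun j => by omega
  have hJT : (of fun i j : Fin n => hInt n (((lam i + i.rev : ℕ) : ℤ) + ((j : ℕ) + 1 - n))) =
      of fun i j : Fin n => hInt n ((lam i : ℤ) - (i : ℕ) + (j : ℕ)) := by
    refine Matrix.ext fun i j => congrArg (hInt n) ?_
    have := i.isLt
    simp only [Fin.val_rev]
    omega
  have hTriangular : (of fun i j : Fin n => hInt n (((i.rev : ℕ) : ℤ) + ((j : ℕ) + 1 - n))) =
      of fun i j : Fin n => hInt n ((j : ℕ) - (i : ℕ)) := by
    refine Matrix.ext fun i j => congrArg (hInt n) ?_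
    have := i.isLt
    simp only [Fin.val_rev]
    omega
  rwa [hJT, hTriangular, det_hInt_sub_eq_one, mul_one] at key

theorem alternant_rev_mul_det_hInt_add (lam mu : Fin n → ℕ) :
    alternant (X : Fin n → MvPolynomial (Fin n) ℤ) (fun i => i.rev) *
        det (of fun i j : Fin n =>
          hInt n ((lam i : ℤ) + (mu j.rev : ℕ) - (i : ℕ) + (j : ℕ))) =
      alternant X (fun i => lam i + i.rev) * schur n mu := by
  have key := alternant_rev_mul_det_hInt (fun i => lam i + i.rev)
    (c := fun j => (mu j.rev : ℕ) + (j : ℕ) + 1 - n) fun j => by omega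
  have hProduct : (of fun i j : Fin n =>
      hInt n (((lam i + i.rev : ℕ) : ℤ) + ((mu j.rev : ℕ) + (j : ℕ) + 1 - n))) =
      of fun i j : Fin n => hInt n ((lam i : ℤ) + (mu j.rev : ℕ) - (i : ℕ) + (j : ℕ)) := by
    refine Matrix.ext fun i j => congrArg (hInt n) ?_
    have := i.isLt
    simp only [Fin.val_rev]
    omega
  have hJT : (of fun i j : Fin n =>
      hInt n (((i.rev : ℕ) : ℤ) + ((mu j.rev : ℕ) + (j : ℕ) + 1 - n))) =
      (of fun i j : Fin n => hInt n ((mu i : ℤ) - (i : ℕ) + (j : ℕ)))ᵀ.submatrix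
        Fin.revPerm Fin.revPerm := by
    refine Matrix.ext fun i j => congrArg (hInt n) ?_
    have := i.isLt
    have := j.isLt
    simp only [Fin.revPerm_apply, Fin.val_rev]
    omega
  rwa [hProduct, hJT, det_submatrix_equiv_self, det_transpose] at key

end JacobiTrudi

theorem schur_mul_schur_det_general (n : ℕ) (lam mu : Fin n → ℕ) :
    schur n lam * schur n mu =
    Matrix.det (Matrix.of fun i j : Fin n =>
      hInt n ((lam i : ℤ) + (mu j.rev : ℕ) - (i : ℕ) + (j : ℕ))) := by
  refine mul_left_cancel₀ (alternant_rev_ne_zero (X_injective (σ := Fin n) (R := ℤ))) ?_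
  rw [← mul_assoc, alternant_rev_mul_schur, alternant_rev_mul_det_hInt_add]

/-- `s_λ · s_μ = det (h_{λ_i + μ_{n+1-j} - i + j})_{i,j=1}^n`. -/
theorem schur_mul_schur_det (n : ℕ) (lam mu : Fin n → ℕ)
    (hlam : Antitone lam) (hmu : Antitone mu) :
    schur n lam * schur n mu =
    Matrix.det (Matrix.of fun i j : Fin n =>
      hInt n ((lam i : ℤ) + (mu j.rev : ℕ) - (i : ℕ) + (j : ℕ))) :=
  schur_mul_schur_det_general n lam mu
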